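/- arXiv:2205.13699 — 2 statements merged into one kernel-verified Lean document; each statement's English description precedes it below -/
import Mathlib

section
/- Let d ≥ 1 and A ∈ ℝ^{d×d}. Let ε₁ and ε₂ be independent random vectors in ℝ^d whose coordinates are i.i.d. standard normal (i.e., ε₁, ε₂ ~ N(0, I_d) independently). Then A is symmetric (A = Aᵀ) if and only if E[(ε₂ᵀ (A − Aᵀ) ε₁)²] = 0. -/
open MeasureTheory ProbabilityTheory Matrix
open scoped BigOperators NNReal ENNReal

/-! A non-degenerate Gaussian charges every open set, so the integral of the continuous,
nonnegative, integrable function `ε ↦ (ε₂ᵀ (A - Aᵀ) ε₁)²` vanishes only if the function does.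
Evaluating at `(e_j, e_i)` then gives `(A - Aᵀ) i j = 0`. -/

instance isOpenPosMeasure_gaussianReal (m : ℝ) (v : ℝ≥0) [NeZero v] :
    (gaussianReal m v).IsOpenPosMeasure :=
  (gaussianReal_absolutelyContinuous' m (NeZero.ne v)).isOpenPosMeasure

lemma memLp_eval_pi {ι : Type*} [Fintype ι] {μ : ι → Measure ℝ}
    [∀ i, IsProbabilityMeasure (μ i)] {p : ℝ≥0∞} (i : ι) (h : MemLp id p (μ i)) :
    MemLp (fun x : ι → ℝ => x i) p (Measure.pi μ) :=
  h.comp_measurePreserving (measurePreserving_eval μ i)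

lemma MeasureTheory.MemLp.mul_prod {α β : Type*} [MeasurableSpace α] [MeasurableSpace β]
    {μ : Measure α} {ν : Measure β} [SFinite ν] {f : α → ℝ} {g : β → ℝ}
    (hf : MemLp f 2 μ) (hg : MemLp g 2 ν) :
    MemLp (fun z : α × β => f z.1 * g z.2) 2 (μ.prod ν) := by
  refine (memLp_two_iff_integrable_sq (hf.1.comp_fst.mul hg.1.comp_snd)).mpr ?_
  simpa only [Pi.mul_apply, mul_pow] using hf.integrable_sq.mul_prod hg.integrable_sq

lemma integrable_sq_sum_mul_mul {ι : Type*} [Fintype ι] {μ ν : Measure (ι → ℝ)} [SFinite ν]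
    (hμ : ∀ i, MemLp (fun x : ι → ℝ => x i) 2 μ) (hν : ∀ i, MemLp (fun x : ι → ℝ => x i) 2 ν)
    (B : Matrix ι ι ℝ) :
    Integrable (fun ε : (ι → ℝ) × (ι → ℝ) => (∑ i, ∑ j, ε.2 i * B i j * ε.1 j) ^ 2)
      (μ.prod ν) := by
  refine MemLp.integrable_sq (memLp_finsetSum _ fun i _ => memLp_finsetSum _ fun j _ => ?_)
  convert (hμ j).mul_prod ((hν i).const_mul (B i j)) using 2 with ε
  ring

theorem matrix_symm_iff_gaussian_expectation_zero_general {d : ℕ}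
    (A : Matrix (Fin d) (Fin d) ℝ) :
    A.IsSymm ↔
      ∫ ε : (Fin d → ℝ) × (Fin d → ℝ),
          (∑ i, ∑ j, ε.2 i * (A - Aᵀ) i j * ε.1 j) ^ 2
        ∂((Measure.pi fun _ : Fin d => gaussianReal 0 1).prod
            (Measure.pi fun _ : Fin d => gaussianReal 0 1)) = 0 := by
  refine ⟨fun hA => by simp [hA.eq], fun h => IsSymm.ext_iff.mpr fun i j => ?_⟩
  have hcoord : ∀ k, MemLp (fun x : Fin d → ℝ => x k) 2
      (Measure.pi fun _ : Fin d => gaussianReal 0 1) :=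
    fun k => memLp_eval_pi k (memLp_id_gaussianReal' 2 (by norm_num))
  have hbasis : (∑ a, ∑ b, (Pi.single i 1 : Fin d → ℝ) a * (A - Aᵀ) a b
      * (Pi.single j 1 : Fin d → ℝ) b) ^ 2 = (A i j - A j i) ^ 2 := by
    simp [Pi.single_apply]
  by_contra hij
  -- not found by instance search, which gets lost among the Haar-measure instances
  have : ((Measure.pi fun _ : Fin d => gaussianReal 0 1).prod
      (Measure.pi fun _ : Fin d => gaussianReal 0 1)).IsOpenPosMeasure :=
    Measure.prod.instIsOpenPosMeasure
  refine (integral_pos_of_integrable_nonneg_nonzero (x := (Pi.single j 1, Pi.single i 1))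
    (by fun_prop) (integrable_sq_sum_mul_mul hcoord hcoord _) (fun _ => sq_nonneg _) ?_).ne' h
  rw [hbasis]
  exact pow_ne_zero 2 (sub_ne_zero.mpr (Ne.symm hij))

/-- A matrix `A ∈ ℝ^{d×d}` is symmetric if and only if
`E[(ε₂ᵀ (A − Aᵀ) ε₁)²] = 0`, where `ε₁, ε₂ ~ N(0, I_d)` are independent standard
Gaussian random vectors. -/
theorem matrix_symm_iff_gaussian_expectation_zero {d : ℕ} (hd : 1 ≤ d)
    (A : Matrix (Fin d) (Fin d) ℝ) :
    A.IsSymm ↔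
      ∫ ε : (Fin d → ℝ) × (Fin d → ℝ),
          (∑ i, ∑ j, ε.2 i * (A - Aᵀ) i j * ε.1 j) ^ 2
        ∂((Measure.pi fun _ : Fin d => gaussianReal 0 1).prod
            (Measure.pi fun _ : Fin d => gaussianReal 0 1)) = 0 :=
  matrix_symm_iff_gaussian_expectation_zero_general A
end

section
/- Let d ≥ 1, let μ be a probability measure on ℝ with mean zero (∫ x dμ = 0), finite second moment m₂ = ∫ x² dμ and finite fourth moment m₄ = ∫ x⁴ dμ. Let ε₁ and ε₂ be independent random vectors in ℝ^d whose coordinates are i.i.d. samples from μ. Let A ∈ ℝ^{d×d} and set B = A − Aᵀ. Then E[(ε₂ᵀ B ε₁)⁴] = m₄² Σ_{a,b} B_{ab}⁴ + 6 m₂² m₄ Σ_a Σ_{b≠d'} B_{ab}² B_{ad'}² + 3 m₂⁴ Σ_{a≠c} Σ_{b≠d'} (B_{ab}² B_{cd'}² + 2 B_{ab} B_{ad'} B_{cb} B_{cd'}). -/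
/-!
Write `ε₂ᵀ B ε₁ = ε₂ ⬝ᵥ w` with `w = B ε₁`. For i.i.d. centred coordinates the only non-vanishing
mixed moments `E[x_i x_j x_k x_l]` are `m₄` (all indices equal) and `m₂²` (indices equal in two
distinct pairs), so `E[(u ⬝ᵥ x)² (v ⬝ᵥ x)²] = m₄ Σ u_i² v_i² + m₂² Σ_{i≠k} (u_i² v_k² + 2 u_i u_k v_i v_k)`.
Applying this first in `ε₂` (by Fubini) and then in `ε₁` to the rows of `B` gives the fourth moment
for an arbitrary `B`; antisymmetry enters only through `B_ab² = B_ba²`, which makes the row and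
column contributions equal and produces the factor `6`.
-/

open MeasureTheory ProbabilityTheory Matrix
open scoped BigOperators

open Finset
open scoped ENNReal

theorem MeasureTheory.MemLp.integrable_mul_mul_mul {α : Type*} [MeasurableSpace α]
    {ν : Measure α} {f g h k : α → ℝ} (hf : MemLp f 4 ν) (hg : MemLp g 4 ν) (hh : MemLp h 4 ν)
    (hk : MemLp k 4 ν) : Integrable (fun x => f x * g x * h x * k x) ν := by
  have : ENNReal.HolderTriple 4 4 2 := ⟨by
    rw [← two_mul, show (4 : ℝ≥0∞) = 2 * 2 by norm_num, ENNReal.mul_inv (by simp) (by simp),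
      ← mul_assoc, ENNReal.mul_inv_cancel (by simp) (by simp), one_mul]⟩
  simpa [Pi.mul_def, mul_assoc] using
    (hg.mul' hf (r := 2)).integrable_mul (hk.mul' hh (r := 2))

theorem memLp_four_of_integrable_pow_four {ν : Measure ℝ}
    (hm4 : Integrable (fun t : ℝ => t ^ 4) ν) : MemLp id 4 ν := by
  refine (integrable_norm_rpow_iff aestronglyMeasurable_id (by norm_num) (by norm_num)).1 ?_
  simpa [Even.pow_abs ⟨2, rfl⟩] using hm4

theorem sq_dotProduct_mul_sq_dotProduct {ι : Type*} [Fintype ι] (u v x : ι → ℝ) :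
    (u ⬝ᵥ x) ^ 2 * (v ⬝ᵥ x) ^ 2
      = ∑ i, ∑ j, ∑ k, ∑ l, u i * u j * v k * v l * (x i * x j * x k * x l) := by
  simp only [dotProduct, sq, sum_mul_sum]
  refine sum_congr rfl fun i _ => ?_
  rw [sum_comm]
  exact sum_congr rfl fun j _ => sum_congr rfl fun k _ => sum_congr rfl fun l _ => by ring

section
variable {ι : Type*} [Fintype ι] {μ : Measure ℝ} [IsProbabilityMeasure μ]

theorem integral_pi_multiset_map_prod [DecidableEq ι] (s : Multiset ι) :
    ∫ x : ι → ℝ, (s.map x).prod ∂Measure.pi (fun _ => μ)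
      = ∏ c ∈ s.toFinset, ∫ t, t ^ s.count c ∂μ := by
  have h : ∀ x : ι → ℝ, (s.map x).prod = ∏ c, x c ^ s.count c := fun x => by
    rw [Finset.prod_multiset_map_count]
    exact prod_subset (subset_univ _) (by simp_all)
  simp_rw [h]
  rw [integral_fintype_prod_eq_prod (fun c t => t ^ s.count c)]
  exact (prod_subset (subset_univ _) (by simp_all)).symm

theorem integral_pi_mul_mul_mul [DecidableEq ι] (hmean : ∫ t, t ∂μ = 0) (i j k l : ι) :
    ∫ x : ι → ℝ, x i * x j * x k * x l ∂Measure.pi (fun _ => μ) =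
      (if i = j ∧ k = l ∧ i = k then ∫ t, t ^ 4 ∂μ else 0)
      + (if i = j ∧ k = l ∧ i ≠ k then (∫ t, t ^ 2 ∂μ) ^ 2 else 0)
      + (if i = k ∧ j = l ∧ i ≠ j then (∫ t, t ^ 2 ∂μ) ^ 2 else 0)
      + (if i = l ∧ j = k ∧ i ≠ j then (∫ t, t ^ 2 ∂μ) ^ 2 else 0) := by
  have h := integral_pi_multiset_map_prod (μ := μ) {i, j, k, l}
  simp only [Multiset.insert_eq_cons, Multiset.map_cons, Multiset.prod_cons,
    Multiset.map_singleton, Multiset.prod_singleton, ← mul_assoc] at h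
  rw [h]
  clear h
  -- an index of multiplicity one contributes a factor `∫ t ∂μ = 0`
  by_cases hij : i = j <;> by_cases hik : i = k <;> by_cases hil : i = l <;>
    by_cases hjk : j = k <;> by_cases hjl : j = l <;> by_cases hkl : k = l <;>
    subst_vars <;> simp [Multiset.count_cons, Finset.prod_insert, eq_comm, sq, *]

theorem memLp_pi_eval (hm4 : Integrable (fun t : ℝ => t ^ 4) μ) (i : ι) :
    MemLp (fun x : ι → ℝ => x i) 4 (Measure.pi fun _ => μ) :=
  (memLp_four_of_integrable_pow_four hm4).comp_measurePreserving (measurePreserving_eval _ i)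

theorem memLp_pi_dotProduct (hm4 : Integrable (fun t : ℝ => t ^ 4) μ) (u : ι → ℝ) :
    MemLp (fun x => u ⬝ᵥ x) 4 (Measure.pi fun _ => μ) :=
  memLp_finsetSum univ fun i _ => (memLp_pi_eval hm4 i).const_mul (u i)

theorem integrable_sq_dotProduct_mul_sq_dotProduct (hm4 : Integrable (fun t : ℝ => t ^ 4) μ)
    (u v : ι → ℝ) :
    Integrable (fun x => (u ⬝ᵥ x) ^ 2 * (v ⬝ᵥ x) ^ 2) (Measure.pi fun _ => μ) := by
  have hu := memLp_pi_dotProduct hm4 u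
  have hv := memLp_pi_dotProduct hm4 v
  simpa only [sq, mul_assoc] using hu.integrable_mul_mul_mul hu hv hv

theorem integral_sq_dotProduct_mul_sq_dotProduct [DecidableEq ι] (hmean : ∫ t, t ∂μ = 0)
    (hm4 : Integrable (fun t : ℝ => t ^ 4) μ) (u v : ι → ℝ) :
    ∫ x, (u ⬝ᵥ x) ^ 2 * (v ⬝ᵥ x) ^ 2 ∂(Measure.pi fun _ => μ)
      = (∫ t, t ^ 4 ∂μ) * ∑ i, u i ^ 2 * v i ^ 2
        + (∫ t, t ^ 2 ∂μ) ^ 2 * ∑ i, ∑ k ∈ univ \ {i},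
            (u i ^ 2 * v k ^ 2 + 2 * u i * u k * v i * v k) := by
  have hmono (i j k l : ι) : Integrable
      (fun x : ι → ℝ => u i * u j * v k * v l * (x i * x j * x k * x l))
      (Measure.pi fun _ => μ) :=
    ((memLp_pi_eval hm4 i).integrable_mul_mul_mul (memLp_pi_eval hm4 j) (memLp_pi_eval hm4 k)
      (memLp_pi_eval hm4 l)).const_mul _
  have hlin : ∫ x, ∑ i, ∑ j, ∑ k, ∑ l, u i * u j * v k * v l * (x i * x j * x k * x l)
        ∂(Measure.pi fun _ => μ)
      = ∑ i, ∑ j, ∑ k, ∑ l, u i * u j * v k * v l *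
          ∫ x, x i * x j * x k * x l ∂(Measure.pi fun _ => μ) := by
    rw [integral_finsetSum _ fun i _ => integrable_finsetSum _ fun j _ =>
      integrable_finsetSum _ fun k _ => integrable_finsetSum _ fun l _ => hmono i j k l]
    refine sum_congr rfl fun i _ => ?_
    rw [integral_finsetSum _ fun j _ => integrable_finsetSum _ fun k _ =>
      integrable_finsetSum _ fun l _ => hmono i j k l]
    refine sum_congr rfl fun j _ => ?_
    rw [integral_finsetSum _ fun k _ => integrable_finsetSum _ fun l _ => hmono i j k l]
    refine sum_congr rfl fun k _ => ?_
    rw [integral_finsetSum _ fun l _ => hmono i j k l]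
    exact sum_congr rfl fun l _ => integral_const_mul _ _
  simp_rw [sq_dotProduct_mul_sq_dotProduct u v, hlin, integral_pi_mul_mul_mul hmean]
  simp only [mul_add, sum_add_distrib, mul_ite, mul_zero, ite_and, sum_ite_irrel, sum_ite_eq,
    mem_univ, if_true, sum_const_zero, ← sum_filter, filter_ne, sdiff_singleton_eq_erase]
  simp only [mul_sum, ← sum_add_distrib, add_assoc]
  exact sum_congr rfl fun i _ => by congr 1 <;> [ring; exact sum_congr rfl fun k _ => by ring]

theorem integrable_pow_four_dotProduct (hm4 : Integrable (fun t : ℝ => t ^ 4) μ) (w : ι → ℝ) :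
    Integrable (fun y => (w ⬝ᵥ y) ^ 4) (Measure.pi fun _ => μ) := by
  simpa only [← pow_add] using integrable_sq_dotProduct_mul_sq_dotProduct hm4 w w

theorem integral_pow_four_dotProduct [DecidableEq ι] (hmean : ∫ t, t ∂μ = 0)
    (hm4 : Integrable (fun t : ℝ => t ^ 4) μ) (w : ι → ℝ) :
    ∫ y, (w ⬝ᵥ y) ^ 4 ∂(Measure.pi fun _ => μ)
      = (∫ t, t ^ 4 ∂μ) * ∑ i, w i ^ 4
        + 3 * (∫ t, t ^ 2 ∂μ) ^ 2 * ∑ i, ∑ k ∈ univ \ {i}, w i ^ 2 * w k ^ 2 := by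
  have h := integral_sq_dotProduct_mul_sq_dotProduct hmean hm4 w w
  have h3 (r s : ℝ) : r ^ 2 * s ^ 2 + 2 * r * s * r * s = 3 * (r ^ 2 * s ^ 2) := by ring
  simp only [← pow_add, Nat.reduceAdd, h3] at h
  rw [h]
  simp only [mul_sum]
  ring_nf

theorem integral_prod_pow_four_dotProduct_mulVec [DecidableEq ι] (hmean : ∫ t, t ∂μ = 0)
    (hm4 : Integrable (fun t : ℝ => t ^ 4) μ) (B : Matrix ι ι ℝ) :
    ∫ ε : (ι → ℝ) × (ι → ℝ), (ε.2 ⬝ᵥ B *ᵥ ε.1) ^ 4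
        ∂((Measure.pi fun _ => μ).prod (Measure.pi fun _ => μ))
      = (∫ t, t ^ 4 ∂μ) ^ 2 * (∑ a, ∑ b, B a b ^ 4)
        + 3 * (∫ t, t ^ 2 ∂μ) ^ 2 * (∫ t, t ^ 4 ∂μ) *
            (∑ a, ∑ b, ∑ d' ∈ univ \ {b}, B a b ^ 2 * B a d' ^ 2
              + ∑ a, ∑ c ∈ univ \ {a}, ∑ b, B a b ^ 2 * B c b ^ 2)
        + 3 * (∫ t, t ^ 2 ∂μ) ^ 4 *
            (∑ a, ∑ c ∈ univ \ {a}, ∑ b, ∑ d' ∈ univ \ {b},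
              (B a b ^ 2 * B c d' ^ 2 + 2 * B a b * B a d' * B c b * B c d')) := by
  set F : (ι → ℝ) → ℝ := fun x => (∫ t, t ^ 4 ∂μ) * ∑ i, (B i ⬝ᵥ x) ^ 4
    + 3 * (∫ t, t ^ 2 ∂μ) ^ 2 * ∑ i, ∑ k ∈ univ \ {i}, (B i ⬝ᵥ x) ^ 2 * (B k ⬝ᵥ x) ^ 2 with hF
  have hinner (x : ι → ℝ) : ∫ y, (y ⬝ᵥ B *ᵥ x) ^ 4 ∂(Measure.pi fun _ => μ) = F x := by
    simp only [dotProduct_comm _ (B *ᵥ x)]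
    exact integral_pow_four_dotProduct hmean hm4 (B *ᵥ x)
  have hterm (i k : ι) := integrable_sq_dotProduct_mul_sq_dotProduct hm4 (B i) (B k)
  have hdiag : Integrable (fun x => ∑ i, (B i ⬝ᵥ x) ^ 4) (Measure.pi fun _ => μ) :=
    integrable_finsetSum _ fun i _ => integrable_pow_four_dotProduct hm4 (B i)
  have hoff : Integrable (fun x => ∑ i, ∑ k ∈ univ \ {i}, (B i ⬝ᵥ x) ^ 2 * (B k ⬝ᵥ x) ^ 2)
      (Measure.pi fun _ => μ) :=
    integrable_finsetSum _ fun i _ => integrable_finsetSum _ fun k _ => hterm i k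
  have hint : Integrable (fun ε : (ι → ℝ) × (ι → ℝ) => (ε.2 ⬝ᵥ B *ᵥ ε.1) ^ 4)
      ((Measure.pi fun _ => μ).prod (Measure.pi fun _ => μ)) := by
    refine (integrable_prod_iff (by fun_prop)).2 ⟨.of_forall fun x => ?_, ?_⟩
    · simpa only [dotProduct_comm _ (B *ᵥ x)] using integrable_pow_four_dotProduct hm4 (B *ᵥ x)
    · simp only [fun r : ℝ => Real.norm_of_nonneg (by positivity : 0 ≤ r ^ 4), hinner]
      exact (hdiag.const_mul _).add (hoff.const_mul _)
  rw [integral_prod _ hint]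
  simp only [hinner, hF]
  rw [integral_add (hdiag.const_mul _) (hoff.const_mul _), integral_const_mul, integral_const_mul,
    integral_finsetSum _ fun i _ => integrable_pow_four_dotProduct hm4 (B i),
    integral_finsetSum _ fun i _ => integrable_finsetSum _ fun k _ => hterm i k]
  simp only [integral_finsetSum _ fun k _ => hterm _ k,
    integral_pow_four_dotProduct hmean hm4, integral_sq_dotProduct_mul_sq_dotProduct hmean hm4]
  simp only [mul_add, mul_sum, sum_add_distrib]
  ring_nf
end

theorem fourth_moment_antisymmetric_quadratic_form_general {d : ℕ}
    (μ : Measure ℝ) [IsProbabilityMeasure μ]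
    (hmean : ∫ x, x ∂μ = 0)
    (hm4 : Integrable (fun x => x ^ 4) μ)
    (A : Matrix (Fin d) (Fin d) ℝ) :
    ∫ ε : (Fin d → ℝ) × (Fin d → ℝ),
        (∑ i, ∑ j, ε.2 i * (A - Aᵀ) i j * ε.1 j) ^ 4
      ∂((Measure.pi fun _ : Fin d => μ).prod (Measure.pi fun _ : Fin d => μ))
      = (∫ x, x ^ 4 ∂μ) ^ 2 * (∑ a, ∑ b, (A - Aᵀ) a b ^ 4)
        + 6 * (∫ x, x ^ 2 ∂μ) ^ 2 * (∫ x, x ^ 4 ∂μ) *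
            (∑ a, ∑ b, ∑ d' ∈ Finset.univ \ {b}, (A - Aᵀ) a b ^ 2 * (A - Aᵀ) a d' ^ 2)
        + 3 * (∫ x, x ^ 2 ∂μ) ^ 4 *
            (∑ a, ∑ c ∈ Finset.univ \ {a}, ∑ b, ∑ d' ∈ Finset.univ \ {b},
              ((A - Aᵀ) a b ^ 2 * (A - Aᵀ) c d' ^ 2
                + 2 * (A - Aᵀ) a b * (A - Aᵀ) a d' * (A - Aᵀ) c b * (A - Aᵀ) c d')) := by
  set B := A - Aᵀ with hB
  have hform (x y : Fin d → ℝ) : ∑ i, ∑ j, y i * B i j * x j = y ⬝ᵥ B *ᵥ x := by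
    simp only [dotProduct, mulVec, mul_sum, mul_assoc]
  have hsq (a b : Fin d) : B b a ^ 2 = B a b ^ 2 := by
    simp only [hB, Matrix.sub_apply, transpose_apply]
    ring
  have hcol : ∑ a, ∑ c ∈ univ \ {a}, ∑ b, B a b ^ 2 * B c b ^ 2
      = ∑ a, ∑ b, ∑ d' ∈ univ \ {b}, B a b ^ 2 * B a d' ^ 2 :=
    ((sum_congr rfl fun _ _ => sum_comm).trans sum_comm).trans <| sum_congr rfl fun a _ =>
      sum_congr rfl fun b _ => sum_congr rfl fun d' _ => by rw [hsq a b, hsq a d']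
  simp only [hform]
  rw [integral_prod_pow_four_dotProduct_mulVec hmean hm4, hcol]
  ring

/-- Fourth moment of the antisymmetric quadratic form: for a zero-mean
probability measure `μ` on `ℝ` with finite second moment `m₂` and fourth moment `m₄`,
independent `ε₁, ε₂` with i.i.d. coordinates from `μ`, and `B = A − Aᵀ`,
`E[(ε₂ᵀ B ε₁)⁴] = m₄² Σ_{a,b} B_{ab}⁴ + 6 m₂² m₄ Σ_a Σ_{b≠d'} B_{ab}² B_{ad'}²
 + 3 m₂⁴ Σ_{a≠c} Σ_{b≠d'} (B_{ab}² B_{cd'}² + 2 B_{ab} B_{ad'} B_{cb} B_{cd'})`. -/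
theorem fourth_moment_antisymmetric_quadratic_form {d : ℕ} (hd : 1 ≤ d)
    (μ : Measure ℝ) [IsProbabilityMeasure μ]
    (hmean : ∫ x, x ∂μ = 0)
    (hm2 : Integrable (fun x => x ^ 2) μ) (hm4 : Integrable (fun x => x ^ 4) μ)
    (A : Matrix (Fin d) (Fin d) ℝ) :
    ∫ ε : (Fin d → ℝ) × (Fin d → ℝ),
        (∑ i, ∑ j, ε.2 i * (A - Aᵀ) i j * ε.1 j) ^ 4
      ∂((Measure.pi fun _ : Fin d => μ).prod (Measure.pi fun _ : Fin d => μ))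
      = (∫ x, x ^ 4 ∂μ) ^ 2 * (∑ a, ∑ b, (A - Aᵀ) a b ^ 4)
        + 6 * (∫ x, x ^ 2 ∂μ) ^ 2 * (∫ x, x ^ 4 ∂μ) *
            (∑ a, ∑ b, ∑ d' ∈ Finset.univ \ {b}, (A - Aᵀ) a b ^ 2 * (A - Aᵀ) a d' ^ 2)
        + 3 * (∫ x, x ^ 2 ∂μ) ^ 4 *
            (∑ a, ∑ c ∈ Finset.univ \ {a}, ∑ b, ∑ d' ∈ Finset.univ \ {b},
              ((A - Aᵀ) a b ^ 2 * (A - Aᵀ) c d' ^ 2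
                + 2 * (A - Aᵀ) a b * (A - Aᵀ) a d' * (A - Aᵀ) c b * (A - Aᵀ) c d')) :=
  fourth_moment_antisymmetric_quadratic_form_general μ hmean hm4 A
end
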